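/- arXiv:1702.00102 — 2 statements merged into one kernel-verified Lean document; each statement's English description precedes it below -/
import Mathlib

section
/- Let Δ ⊂ ℝ³ be the convex hull of (−1,0,1), (−1,0,0), (0,1,−1), (2,3,−1), (2,2,−1), (1,−1,−1), (0,−1,−1) (a reflexive polytope). For every edge Γ of Δ, at least one of the following holds: the only points of ℤ³ on Γ are its two endpoints, or the only points of ℤ³ on the dual edge Γ* = {y ∈ Δ* : ⟨y, x⟩ = −1 for all x ∈ Γ} are its two endpoints. (Equivalently, l*(Γ)·l*(Γ*) = 0 for all edges Γ, so the sum Σ_Γ l*(Γ) l*(Γ*) over all edges of Δ vanishes.) -/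
/-!
An exposed face of rank one of a polytope is a segment between two of its vertices. For every pair
of vertices of `Δ` except the three pairs formed by `(0,1,-1)`, `(2,3,-1)`, `(0,-1,-1)`, the
difference is a primitive lattice vector, so the segment has no lattice points besides its ends.
For those three pairs the inequalities defining `Δ*` force the dual face onto a segment with
primitive direction, which therefore has no interior lattice points either.
-/

open Set Module

section Segment

variable {𝕜 E : Type*} [Field 𝕜] [LinearOrder 𝕜] [IsStrictOrderedRing 𝕜] [AddCommGroup E]
  [Module 𝕜 E]

theorem left_mem_extremePoints_segment (x y : E) : x ∈ (segment 𝕜 x y).extremePoints 𝕜 := by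
  refine ⟨left_mem_segment 𝕜 x y, ?_⟩
  rintro _ hx₁ _ hx₂ hx
  rw [segment_eq_image'] at hx₁ hx₂
  obtain ⟨s, ⟨hs, -⟩, rfl⟩ := hx₁
  obtain ⟨t, ⟨ht, -⟩, rfl⟩ := hx₂
  obtain ⟨a, b, ha, hb, hab, hx⟩ := hx
  have hzero : (a * s + b * t) • (y - x) = 0 := by
    linear_combination (norm := module) hx - hab • x
  rcases smul_eq_zero.1 hzero with h | h
  · have hs0 : s = 0 := by nlinarith [mul_nonneg ha.le hs, mul_nonneg hb.le ht]
    simp [hs0]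
  · simp [h]

theorem right_mem_extremePoints_segment (x y : E) : y ∈ (segment 𝕜 x y).extremePoints 𝕜 := by
  rw [segment_symm]
  exact left_mem_extremePoints_segment y x

end Segment

section Edge

variable {E : Type*} [NormedAddCommGroup E] [NormedSpace ℝ E]

/- A functional `g` with `g d = 1` identifies the line through `s` with `ℝ`; its minimum and
maximum on `s` are the ends of the segment. -/
theorem IsCompact.exists_eq_segment_of_collinear {s : Set E} (hs : IsCompact s)
    (hconv : Convex ℝ s) (hcol : Collinear ℝ s) (hne : s.Nonempty) :
    ∃ v w, s = segment ℝ v w := by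
  obtain ⟨p₀, hp₀⟩ := hne
  obtain ⟨d, hd⟩ := (collinear_iff_of_mem hp₀).1 hcol
  rcases eq_or_ne d 0 with rfl | hd0
  · refine ⟨p₀, p₀, ?_⟩
    rw [segment_same, eq_singleton_iff_unique_mem]
    exact ⟨hp₀, fun x hx => by simpa using hd x hx⟩
  obtain ⟨g, hg⟩ := SeparatingDual.exists_eq_one (R := ℝ) hd0
  set f : ℝ →ᵃ[ℝ] E := AffineMap.lineMap p₀ (p₀ + d)
  have hf : ∀ x ∈ s, f (g (x - p₀)) = x := by
    intro x hx
    obtain ⟨r, rfl⟩ := hd x hx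
    simp [f, AffineMap.lineMap_apply, hg]
  have hgc : Continuous fun x => g (x - p₀) := by fun_prop
  obtain ⟨v, hv, hmin⟩ := hs.exists_isMinOn ⟨p₀, hp₀⟩ hgc.continuousOn
  obtain ⟨w, hw, hmax⟩ := hs.exists_isMaxOn ⟨p₀, hp₀⟩ hgc.continuousOn
  refine ⟨v, w, subset_antisymm (fun x hx => ?_) (hconv.segment_subset hv hw)⟩
  rw [← hf x hx, ← hf v hv, ← hf w hw, ← image_segment, segment_eq_Icc (hmin hw)]
  exact mem_image_of_mem f ⟨hmin hx, hmax hx⟩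

theorem IsExposed.exists_eq_segment_of_finrank_vectorSpan_eq_one {S Γ : Set E} (hS : S.Finite)
    (hΓ : IsExposed ℝ (convexHull ℝ S) Γ) (hrank : finrank ℝ (vectorSpan ℝ Γ) = 1) :
    ∃ v ∈ S, ∃ w ∈ S, Γ = segment ℝ v w := by
  have hne : Γ.Nonempty := by
    rw [nonempty_iff_ne_empty]
    rintro rfl
    rw [vectorSpan_empty, finrank_bot] at hrank
    exact zero_ne_one hrank
  have : Module.Finite ℝ (vectorSpan ℝ Γ) := Module.finite_of_finrank_pos (by omega)
  have hcol : Collinear ℝ Γ := (collinear_iff_finrank_le_one (k := ℝ)).2 hrank.le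
  obtain ⟨v, w, rfl⟩ := (hΓ.isCompact (hS.isCompact_convexHull ℝ)).exists_eq_segment_of_collinear
    (hΓ.convex (convex_convexHull ℝ S)) hcol hne
  have hext := hΓ.isExtreme.extremePoints_subset_extremePoints.trans extremePoints_convexHull_subset
  exact ⟨v, hext (left_mem_extremePoints_segment v w), w,
    hext (right_mem_extremePoints_segment v w), rfl⟩

end Edge

section Lattice

variable {ι : Type*}

/-- For an edge `Γ`, `LatticePointsExtreme Γ` says `l*(Γ) = 0`. -/
def LatticePointsExtreme (s : Set (ι → ℝ)) : Prop :=
  ∀ p : ι → ℤ, (Int.cast ∘ p : ι → ℝ) ∈ s → (Int.cast ∘ p : ι → ℝ) ∈ s.extremePoints ℝ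

theorem LatticePointsExtreme.mono {s t : Set (ι → ℝ)} (ht : LatticePointsExtreme t)
    (hst : s ⊆ t) : LatticePointsExtreme s :=
  fun p hp => inter_extremePoints_subset_extremePoints_of_subset hst ⟨hp, ht p (hst hp)⟩

theorem latticePointsExtreme_segment_self (x : ι → ℝ) : LatticePointsExtreme (segment ℝ x x) := by
  intro p hp
  rwa [segment_same, extremePoints_singleton] at *

variable [Fintype ι]

/- With `u ⬝ᵥ (b - a) = 1`, the parameter of a lattice point `a + t • (b - a)` is the integer
`u ⬝ᵥ (p - a)`. -/
theorem eq_or_eq_of_intCast_mem_segment {a b p u : ι → ℤ} (hu : u ⬝ᵥ (b - a) = 1)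
    (hp : (Int.cast ∘ p : ι → ℝ) ∈ segment ℝ (Int.cast ∘ a) (Int.cast ∘ b)) : p = a ∨ p = b := by
  rw [segment_eq_image'] at hp
  obtain ⟨t, ⟨ht0, ht1⟩, htp⟩ := hp
  have hcoord : ∀ i, ((p i - a i : ℤ) : ℝ) = t * ((b i - a i : ℤ) : ℝ) := by
    intro i
    have := congrFun htp i
    simp only [Pi.add_apply, Pi.smul_apply, Pi.sub_apply, Function.comp_apply, smul_eq_mul]
      at this
    push_cast
    linarith
  have ht : ((u ⬝ᵥ (p - a) : ℤ) : ℝ) = t := by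
    calc ((u ⬝ᵥ (p - a) : ℤ) : ℝ) = t * ((u ⬝ᵥ (b - a) : ℤ) : ℝ) := by
          simp only [dotProduct, Int.cast_sum, Int.cast_mul, Pi.sub_apply, hcoord, Finset.mul_sum]
          exact Finset.sum_congr rfl fun i _ => by ring
      _ = t := by rw [hu, Int.cast_one, mul_one]
  have hN : u ⬝ᵥ (p - a) = 0 ∨ u ⬝ᵥ (p - a) = 1 := by
    have h0 : 0 ≤ u ⬝ᵥ (p - a) := by exact_mod_cast ht ▸ ht0
    have h1 : u ⬝ᵥ (p - a) ≤ 1 := by exact_mod_cast ht ▸ ht1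
    omega
  have hinj : Function.Injective (Int.cast ∘ · : (ι → ℤ) → ι → ℝ) := Int.cast_injective.comp_left
  rcases hN with hN | hN <;> rw [hN] at ht <;> subst ht
  · left; apply hinj; simpa using htp.symm
  · right; apply hinj; simpa using htp.symm

theorem latticePointsExtreme_segment {a b u : ι → ℤ} (hu : u ⬝ᵥ (b - a) = 1) :
    LatticePointsExtreme (segment ℝ (Int.cast ∘ a : ι → ℝ) (Int.cast ∘ b)) := by
  intro p hp
  rcases eq_or_eq_of_intCast_mem_segment hu hp with rfl | rfl
  · exact left_mem_extremePoints_segment _ _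
  · exact right_mem_extremePoints_segment _ _

theorem exists_dotProduct_eq_one_of_gcd_eq_one {d : Fin 3 → ℤ}
    (h : Int.gcd (d 0) (Int.gcd (d 1) (d 2)) = 1) : ∃ u : Fin 3 → ℤ, u ⬝ᵥ d = 1 := by
  set g := Int.gcd (d 1) (d 2)
  refine ⟨![Int.gcdA (d 0) g, Int.gcdB (d 0) g * Int.gcdA (d 1) (d 2),
    Int.gcdB (d 0) g * Int.gcdB (d 1) (d 2)], ?_⟩
  have h₀ := Int.gcd_eq_gcd_ab (d 0) g
  have h₁ : (g : ℤ) = _ := Int.gcd_eq_gcd_ab (d 1) (d 2)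
  rw [h, Nat.cast_one] at h₀
  simp only [dotProduct, Fin.sum_univ_three, Matrix.cons_val_zero, Matrix.cons_val_one,
    Matrix.cons_val]
  linear_combination -h₀ - Int.gcdB (d 0) g * h₁

end Lattice

section Polar

variable {ι : Type*} [Fintype ι]

def polarDual (s : Set (ι → ℝ)) : Set (ι → ℝ) := {y | ∀ x ∈ s, -1 ≤ y ⬝ᵥ x}

def dualFace (Δ Γ : Set (ι → ℝ)) : Set (ι → ℝ) := {y ∈ polarDual Δ | ∀ x ∈ Γ, y ⬝ᵥ x = -1}

theorem mem_dualFace_convexHull_segment {S : Set (ι → ℝ)} {v w y : ι → ℝ}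
    (hy : y ∈ dualFace (convexHull ℝ S) (segment ℝ v w)) :
    (∀ x ∈ S, -1 ≤ y ⬝ᵥ x) ∧ y ⬝ᵥ v = -1 ∧ y ⬝ᵥ w = -1 :=
  ⟨fun x hx => hy.1 x (subset_convexHull ℝ S hx), hy.2 v (left_mem_segment ℝ v w),
    hy.2 w (right_mem_segment ℝ v w)⟩

end Polar

namespace Z10

def vertex : Fin 7 → Fin 3 → ℤ :=
  ![![-1, 0, 1], ![-1, 0, 0], ![0, 1, -1], ![2, 3, -1], ![2, 2, -1], ![1, -1, -1], ![0, -1, -1]]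

abbrev realVertex (k : Fin 7) : Fin 3 → ℝ := Int.cast ∘ vertex k

theorem range_realVertex : range realVertex =
    {![-1, 0, 1], ![-1, 0, 0], ![0, 1, -1], ![2, 3, -1], ![2, 2, -1], ![1, -1, -1], ![0, -1, -1]} := by
  have : realVertex =
      ![![-1, 0, 1], ![-1, 0, 0], ![0, 1, -1], ![2, 3, -1], ![2, 2, -1], ![1, -1, -1], ![0, -1, -1]] := by
    ext k i
    fin_cases k <;> fin_cases i <;> simp [vertex]
  rw [this]
  simp only [Matrix.range_cons, Matrix.range_empty, union_empty, singleton_union]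

theorem eq_or_gcd_eq_one_or_exceptional (i j : Fin 7) (hij : i ≤ j) :
    i = j ∨ Int.gcd ((vertex j - vertex i) 0)
      (Int.gcd ((vertex j - vertex i) 1) ((vertex j - vertex i) 2)) = 1 ∨
    (i, j) ∈ [(2, 3), (2, 6), (3, 6)] := by
  revert i j
  decide

/- The dual face lies on the primitive segment `y = e₃ + y 0 • (b - e₃)`, with `b = (1, -1, 0)`
for the pair `{2, 3}` and `b = (1, 0, 1)` for `{2, 6}` and `{3, 6}`. -/
theorem latticePointsExtreme_dualFace_of_exceptional {i j : Fin 7}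
    (h : (i, j) ∈ [(2, 3), (2, 6), (3, 6)]) :
    LatticePointsExtreme (dualFace (convexHull ℝ (range realVertex))
      (segment ℝ (realVertex i) (realVertex j))) := by
  have hFace23 := latticePointsExtreme_segment (a := ![0, 0, 1]) (b := ![1, -1, 0]) (u := ![1, 0, 0])
    (by decide)
  have hFace6 := latticePointsExtreme_segment (a := ![0, 0, 1]) (b := ![1, 0, 1]) (u := ![1, 0, 0])
    (by decide)
  simp only [List.mem_cons, Prod.mk.injEq, List.not_mem_nil, or_false] at h
  rcases h with ⟨rfl, rfl⟩ | ⟨rfl, rfl⟩ | ⟨rfl, rfl⟩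
  on_goal 1 => refine hFace23.mono fun y hy => ?_
  on_goal 2 => refine hFace6.mono fun y hy => ?_
  on_goal 3 => refine hFace6.mono fun y hy => ?_
  all_goals
    obtain ⟨hP, hi, hj⟩ := mem_dualFace_convexHull_segment hy
    simp only [forall_mem_range, Fin.forall_fin_succ] at hP
    obtain ⟨h0, h1, h2, h3, h4, h5, h6, -⟩ := hP
    simp only [dotProduct, Fin.sum_univ_three, Function.comp_apply, vertex, Fin.succ_zero_eq_one,
      Fin.succ_one_eq_two, Fin.reduceSucc, Matrix.cons_val, Matrix.cons_val_zero,
      Matrix.cons_val_one, Int.cast_neg, Int.cast_one, Int.cast_zero, Int.cast_ofNat]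
      at h0 h1 h2 h3 h4 h5 h6 hi hj
    rw [segment_eq_image']
    exact ⟨y 0, ⟨by linarith, by linarith⟩, funext fun k => by fin_cases k <;> simp <;> linarith⟩

theorem latticePointsExtreme_edge_or_dualFace (i j : Fin 7) :
    LatticePointsExtreme (segment ℝ (realVertex i) (realVertex j)) ∨
    LatticePointsExtreme (dualFace (convexHull ℝ (range realVertex))
      (segment ℝ (realVertex i) (realVertex j))) := by
  wlog hij : i ≤ j generalizing i j
  · rw [segment_symm]
    exact this j i (le_of_not_ge hij)
  rcases eq_or_gcd_eq_one_or_exceptional i j hij with rfl | hgcd | hexc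
  · exact .inl (latticePointsExtreme_segment_self _)
  · obtain ⟨u, hu⟩ := exists_dotProduct_eq_one_of_gcd_eq_one hgcd
    exact .inl (latticePointsExtreme_segment hu)
  · exact .inr (latticePointsExtreme_dualFace_of_exceptional hexc)

end Z10

/-- For every edge Γ of the reflexive polytope Δ, either Γ has no interior
lattice points or its dual edge Γ* has none: every lattice point on Γ
(resp. on Γ*) is an extreme point, i.e. an endpoint. -/
theorem stmt_4 :
    let Δ : Set (Fin 3 → ℝ) := convexHull ℝ ({![-1,0,1], ![-1,0,0], ![0,1,-1], ![2,3,-1], ![2,2,-1], ![1,-1,-1], ![0,-1,-1]} : Set (Fin 3 → ℝ))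
    let dual : Set (Fin 3 → ℝ) := {y | ∀ x ∈ Δ, -1 ≤ ∑ i, y i * x i}
    ∀ Γ : Set (Fin 3 → ℝ), IsExposed ℝ Δ Γ →
      Module.finrank ℝ (vectorSpan ℝ Γ) = 1 →
      (∀ p : Fin 3 → ℤ, (fun i => (p i : ℝ)) ∈ Γ →
          (fun i => (p i : ℝ)) ∈ Set.extremePoints ℝ Γ) ∨
      (∀ p : Fin 3 → ℤ,
          (fun i => (p i : ℝ)) ∈ {y ∈ dual | ∀ x ∈ Γ, ∑ i, y i * x i = -1} →
          (fun i => (p i : ℝ)) ∈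
            Set.extremePoints ℝ {y ∈ dual | ∀ x ∈ Γ, ∑ i, y i * x i = -1}) := by
  intro Δ dual Γ hΓ hrank
  obtain ⟨v, hv, w, hw, rfl⟩ :=
    hΓ.exists_eq_segment_of_finrank_vectorSpan_eq_one (toFinite _) hrank
  rw [← Z10.range_realVertex] at hv hw
  obtain ⟨i, rfl⟩ := hv
  obtain ⟨j, rfl⟩ := hw
  have h := Z10.latticePointsExtreme_edge_or_dualFace i j
  rw [Z10.range_realVertex] at h
  exact h
end

section
/- Let Δ ⊂ ℝ³ be the convex hull of (−1,0,1), (−1,0,0), (1,2,−1), (2,3,−1), (0,−1,0) (a reflexive polytope). For every edge Γ of Δ, at least one of the following holds: the only points of ℤ³ on Γ are its two endpoints, or the only points of ℤ³ on the dual edge Γ* = {y ∈ Δ* : ⟨y, x⟩ = −1 for all x ∈ Γ} are its two endpoints. (Equivalently, l*(Γ)·l*(Γ*) = 0 for all edges Γ, so the sum Σ_Γ l*(Γ) l*(Γ*) over all edges of Δ vanishes.) -/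
/-!
Δ lies in the polar of the five vertices of Δ*, and the only lattice points there are the
five vertices of Δ, the origin and (0,1,0). Each vertex of Δ is an exposed point, hence an
endpoint of every edge through it, so a lattice point in the relative interior of an edge can
only be the origin or (0,1,0). A face through the origin has empty dual face, since every point
pairs to 0 with the origin, and the only lattice point of Δ* pairing to -1 with (0,1,0) is its
vertex (1,-1,0), again an exposed point.
-/

open Matrix

def dotPolar {n : Type*} [Fintype n] (S : Set (n → ℝ)) : Set (n → ℝ) :=
  {y | ∀ x ∈ S, -1 ≤ y ⬝ᵥ x}

section dotPolar

variable {n : Type*} [Fintype n]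

theorem convex_dotPolar (S : Set (n → ℝ)) : Convex ℝ (dotPolar S) := by
  intro y₁ hy₁ y₂ hy₂ a b ha hb hab x hx
  calc -1 = a * -1 + b * -1 := by linear_combination hab
    _ ≤ a * (y₁ ⬝ᵥ x) + b * (y₂ ⬝ᵥ x) := by gcongr <;> simp_all [dotPolar]
    _ = (a • y₁ + b • y₂) ⬝ᵥ x := by simp [add_dotProduct]

theorem dotPolar_anti {S T : Set (n → ℝ)} (h : S ⊆ T) : dotPolar T ⊆ dotPolar S :=
  fun _ hy x hx => hy x (h hx)

theorem subset_dotPolar_comm {S T : Set (n → ℝ)} : S ⊆ dotPolar T ↔ T ⊆ dotPolar S :=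
  ⟨fun h y hy x hx => dotProduct_comm x y ▸ h hx y hy,
    fun h x hx y hy => dotProduct_comm y x ▸ h hy x hx⟩

theorem convexHull_subset_dotPolar {S T : Set (n → ℝ)} (h : S ⊆ dotPolar T) :
    convexHull ℝ S ⊆ dotPolar T :=
  convexHull_min h (convex_dotPolar T)

theorem mem_exposedPoints_of_dotProduct {A : Set (n → ℝ)}
    {v : n → ℝ} (w : n → ℝ) (hv : v ∈ A)
    (h : ∀ y ∈ A, w ⬝ᵥ y ≤ w ⬝ᵥ v ∧ (w ⬝ᵥ v ≤ w ⬝ᵥ y → y = v)) :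
    v ∈ A.exposedPoints ℝ :=
  ⟨hv, LinearMap.toContinuousLinearMap (dotProductBilin ℝ ℝ w), h⟩

end dotPolar

def vertices : Set (Fin 3 → ℝ) :=
  {![-1, 0, 1], ![-1, 0, 0], ![1, 2, -1], ![2, 3, -1], ![0, -1, 0]}

def dualVertices : Set (Fin 3 → ℝ) :=
  {![-1, 1, 2], ![1, 1, 0], ![-5, 1, -6], ![1, -1, 0], ![1, 1, 4]}

theorem mem_dotPolar_vertices {y : Fin 3 → ℝ} :
    y ∈ dotPolar vertices ↔ -1 ≤ -y 0 + y 2 ∧ -1 ≤ -y 0 ∧ -1 ≤ y 0 + 2 * y 1 - y 2 ∧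
      -1 ≤ 2 * y 0 + 3 * y 1 - y 2 ∧ -1 ≤ -y 1 := by
  simp only [dotPolar, vertices, Set.mem_insert_iff, Set.mem_singleton_iff, forall_eq_or_imp,
    forall_eq, Set.mem_ofPred_eq, dotProduct, Fin.sum_univ_three, cons_val_zero, cons_val_one,
    cons_val]
  constructor <;> rintro ⟨h₁, h₂, h₃, h₄, h₅⟩ <;> refine ⟨?_, ?_, ?_, ?_, ?_⟩ <;> linarith

theorem mem_dotPolar_dualVertices {x : Fin 3 → ℝ} :
    x ∈ dotPolar dualVertices ↔ -1 ≤ -x 0 + x 1 + 2 * x 2 ∧ -1 ≤ x 0 + x 1 ∧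
      -1 ≤ -5 * x 0 + x 1 - 6 * x 2 ∧ -1 ≤ x 0 - x 1 ∧ -1 ≤ x 0 + x 1 + 4 * x 2 := by
  simp only [dotPolar, dualVertices, Set.mem_insert_iff, Set.mem_singleton_iff, forall_eq_or_imp,
    forall_eq, Set.mem_ofPred_eq, dotProduct, Fin.sum_univ_three, cons_val_zero, cons_val_one,
    cons_val]
  constructor <;> rintro ⟨h₁, h₂, h₃, h₄, h₅⟩ <;> refine ⟨?_, ?_, ?_, ?_, ?_⟩ <;> linarith

theorem vertices_subset_dotPolar_dualVertices : vertices ⊆ dotPolar dualVertices := by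
  simp only [vertices, Set.insert_subset_iff, Set.singleton_subset_iff, mem_dotPolar_dualVertices,
    cons_val_zero, cons_val_one, cons_val]
  norm_num

theorem vertices_subset_exposedPoints :
    vertices ⊆ (dotPolar dualVertices).exposedPoints ℝ := by
  have hV := vertices_subset_dotPolar_dualVertices
  simp only [vertices, Set.insert_subset_iff, Set.singleton_subset_iff] at hV ⊢
  obtain ⟨h₁, h₂, h₃, h₄, h₅⟩ := hV
  -- each `w` is minus the sum of the three facet normals in `dualVertices` tight at the vertex
  refine ⟨mem_exposedPoints_of_dotProduct ![3, -1, 6] h₁ ?_,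
    mem_exposedPoints_of_dotProduct ![-3, -1, -4] h₂ ?_,
    mem_exposedPoints_of_dotProduct ![-1, -1, -6] h₃ ?_,
    mem_exposedPoints_of_dotProduct ![5, -1, 4] h₄ ?_,
    mem_exposedPoints_of_dotProduct ![5, -3, 4] h₅ ?_⟩ <;>
  · intro y hy
    rw [mem_dotPolar_dualVertices] at hy
    simp only [dotProduct, Fin.sum_univ_three, cons_val_zero, cons_val_one, cons_val]
    refine ⟨by linarith, fun h => ?_⟩
    ext i
    fin_cases i <;> simp <;> linarith

theorem dualVertex_mem_exposedPoints : ![1, -1, 0] ∈ (dotPolar vertices).exposedPoints ℝ := by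
  refine mem_exposedPoints_of_dotProduct ![1, -2, 0]
    (subset_dotPolar_comm.1 vertices_subset_dotPolar_dualVertices (by simp [dualVertices]))
    fun y hy => ?_
  rw [mem_dotPolar_vertices] at hy
  simp only [dotProduct, Fin.sum_univ_three, cons_val_zero, cons_val_one, cons_val]
  refine ⟨by linarith, fun h => ?_⟩
  ext i
  fin_cases i <;> simp <;> linarith

theorem intCast_eq_vec (p : Fin 3 → ℤ) : (fun i => (p i : ℝ)) = ![(p 0 : ℝ), p 1, p 2] := by
  ext i; fin_cases i <;> rfl

theorem intCast_mem_dotPolar_dualVertices {p : Fin 3 → ℤ}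
    (hp : (fun i => (p i : ℝ)) ∈ dotPolar dualVertices) :
    (fun i => (p i : ℝ)) ∈ vertices ∨ (fun i => (p i : ℝ)) = 0 ∨
      (fun i => (p i : ℝ)) = ![0, 1, 0] := by
  rw [mem_dotPolar_dualVertices] at hp
  obtain ⟨h₁, h₂, h₃, h₄, h₅⟩ := hp
  norm_cast at h₁ h₂ h₃ h₄ h₅
  have : p 0 = -1 ∧ p 1 = 0 ∧ p 2 = 1 ∨ p 0 = -1 ∧ p 1 = 0 ∧ p 2 = 0 ∨
      p 0 = 1 ∧ p 1 = 2 ∧ p 2 = -1 ∨ p 0 = 2 ∧ p 1 = 3 ∧ p 2 = -1 ∨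
      p 0 = 0 ∧ p 1 = -1 ∧ p 2 = 0 ∨ p 0 = 0 ∧ p 1 = 0 ∧ p 2 = 0 ∨
      p 0 = 0 ∧ p 1 = 1 ∧ p 2 = 0 := by omega
  rw [intCast_eq_vec]
  rcases this with ⟨e₀, e₁, e₂⟩ | ⟨e₀, e₁, e₂⟩ | ⟨e₀, e₁, e₂⟩ | ⟨e₀, e₁, e₂⟩ | ⟨e₀, e₁, e₂⟩ |
    ⟨e₀, e₁, e₂⟩ | ⟨e₀, e₁, e₂⟩ <;>
  simp [vertices, e₀, e₁, e₂, ← Matrix.cons_zero_zero]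

theorem intCast_eq_of_mem_dotPolar_vertices {p : Fin 3 → ℤ}
    (hp : (fun i => (p i : ℝ)) ∈ dotPolar vertices)
    (h : (fun i => (p i : ℝ)) ⬝ᵥ ![0, 1, 0] = -1) :
    (fun i => (p i : ℝ)) = ![1, -1, 0] := by
  rw [mem_dotPolar_vertices] at hp
  obtain ⟨h₁, h₂, h₃, h₄, -⟩ := hp
  simp only [dotProduct, Fin.sum_univ_three, cons_val_zero, cons_val_one, cons_val] at h
  norm_num at h
  norm_cast at h h₁ h₂ h₃ h₄
  have : p 0 = 1 ∧ p 2 = 0 := by omega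
  rw [intCast_eq_vec, this.1, this.2, h]
  norm_num

/-- For every edge Γ of the reflexive polytope Δ, either Γ has no interior
lattice points or its dual edge Γ* has none: every lattice point on Γ
(resp. on Γ*) is an extreme point, i.e. an endpoint. -/
theorem stmt_19 :
    let Δ : Set (Fin 3 → ℝ) := convexHull ℝ ({![-1,0,1], ![-1,0,0], ![1,2,-1], ![2,3,-1], ![0,-1,0]} : Set (Fin 3 → ℝ))
    let dual : Set (Fin 3 → ℝ) := {y | ∀ x ∈ Δ, -1 ≤ ∑ i, y i * x i}
    ∀ Γ : Set (Fin 3 → ℝ), IsExposed ℝ Δ Γ →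
      Module.finrank ℝ (vectorSpan ℝ Γ) = 1 →
      (∀ p : Fin 3 → ℤ, (fun i => (p i : ℝ)) ∈ Γ →
          (fun i => (p i : ℝ)) ∈ Set.extremePoints ℝ Γ) ∨
      (∀ p : Fin 3 → ℤ,
          (fun i => (p i : ℝ)) ∈ {y ∈ dual | ∀ x ∈ Γ, ∑ i, y i * x i = -1} →
          (fun i => (p i : ℝ)) ∈
            Set.extremePoints ℝ {y ∈ dual | ∀ x ∈ Γ, ∑ i, y i * x i = -1}) := by
  intro Δ dual Γ hΓ _
  have hΔ : Δ ⊆ dotPolar dualVertices :=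
    convexHull_subset_dotPolar vertices_subset_dotPolar_dualVertices
  have hdual : dual ⊆ dotPolar vertices := dotPolar_anti (subset_convexHull ℝ vertices)
  by_cases hΓ₀ : 0 ∈ Γ ∨ ![0, 1, 0] ∈ Γ
  · right
    intro p hp
    rcases hΓ₀ with h₀ | h₁
    · simpa using hp.2 0 h₀
    · have hp₁ := intCast_eq_of_mem_dotPolar_vertices (hdual hp.1) (hp.2 _ h₁)
      rw [hp₁] at hp ⊢
      exact inter_extremePoints_subset_extremePoints_of_subset (fun y hy => hdual hy.1)
        ⟨hp, exposedPoints_subset_extremePoints dualVertex_mem_exposedPoints⟩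
  · left
    obtain ⟨h₀, h₁⟩ := not_or.1 hΓ₀
    intro p hp
    rcases intCast_mem_dotPolar_dualVertices (hΔ (hΓ.subset hp)) with hv | hp₀ | hp₁
    · exact inter_extremePoints_subset_extremePoints_of_subset (hΓ.subset.trans hΔ)
        ⟨hp, exposedPoints_subset_extremePoints (vertices_subset_exposedPoints hv)⟩
    · exact absurd (hp₀ ▸ hp) h₀
    · exact absurd (hp₁ ▸ hp) h₁
end
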